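/- Let P be a fine saturated monoid and k a field with trivial absolute value. The map J_P : σ̄_P → (multiplicative seminorms on k[P]), u ↦ J_P(u), is a section of the tropicalization map: for every u ∈ σ̄_P = Hom(P, ℝ̄≥0) and every p ∈ P, one has −log J_P(u)(χ^p) = u(p); i.e., trop_P(J_P(u)) = u. -/

import Mathlib

open scoped NNReal ENNReal

/-- `exp(−t)` for `t ∈ [0, ∞]`, with the convention `exp(−∞) = 0`. -/
noncomputable def expNeg (t : ℝ≥0∞) : ℝ≥0 :=
  if t = ∞ then 0 else Real.toNNReal (Real.exp (-(t.toReal)))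

/-- `−log x` for `x ∈ ℝ≥0`, with the convention `−log 0 = ∞`, valued in `ℝ̄≥0`. -/
noncomputable def negLog (x : ℝ≥0) : ℝ≥0∞ :=
  if x = 0 then ∞ else ENNReal.ofReal (-Real.log x)

/-- The seminorm `J_P(u)` on `k[P]`: `J_P(u)(∑ a_p χ^p) = max_{a_p ≠ 0} exp(−u(p))`. -/
noncomputable def J {k P : Type*} [Field k] [AddCommMonoid P]
    (u : P →+ ℝ≥0∞) (f : AddMonoidAlgebra k P) : ℝ≥0 :=
  f.coeff.support.sup fun p => expNeg (u p)

theorem negLog_expNeg (t : ℝ≥0∞) : negLog (expNeg t) = t := by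
  rcases eq_or_ne t ∞ with rfl | ht
  · simp [expNeg, negLog]
  · have hexp_pos : 0 < Real.exp (-t.toReal) := Real.exp_pos _
    have hexp_ne : (Real.exp (-t.toReal)).toNNReal ≠ 0 := by simpa using hexp_pos
    simp only [expNeg, negLog, ht, hexp_ne, if_false]
    rw [Real.coe_toNNReal _ hexp_pos.le, Real.log_exp, neg_neg, ENNReal.ofReal_toReal ht]

theorem J_single {k P : Type*} [Field k] [AddCommMonoid P] (u : P →+ ℝ≥0∞) (p : P) {a : k}
    (ha : a ≠ 0) : J u (AddMonoidAlgebra.single p a) = expNeg (u p) := by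
  rw [J, AddMonoidAlgebra.coeff_single, Finsupp.support_single p ha, Finset.sup_singleton]

/-- `J_P` is a section of the tropicalization map: for every `u ∈ σ̄_P = Hom(P, ℝ̄≥0)` and
`p ∈ P` one has `−log J_P(u)(χ^p) = u(p)`, i.e. `trop_P(J_P(u)) = u`. -/
theorem trop_J_eq_id (k P : Type*) [Field k] [AddCommMonoid P]
    (u : P →+ ℝ≥0∞) (p : P) :
    negLog (J u (AddMonoidAlgebra.single p (1 : k))) = u p := by
  rw [J_single u p one_ne_zero, negLog_expNeg]
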